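/- Let A, B, C be affinely independent points in ℝ². Let S = |det(C − B, A − B)|/2 be the area of triangle ABC, let a = dist(B, C), b = dist(C, A), and define h_a = 2S/a, h_b = 2S/b. If a > b and the angle ∠ACB is not a right angle, then a·h_a/(a + h_a) < b·h_b/(b + h_b). -/

import Mathlib

/-!
Write `a = BC`, `b = CA` and `T = 2S`. The inscribed square on the side of length `a` has side
`a h_a / (a + h_a) = T / (a + T / a)`, so the claim is `b + T / b < a + T / a`, and
`(a + T / a) - (b + T / b) = (a - b) (a b - T) / (a b)`. Hence everything comes down to
`T < a b`, i.e. `T = a b sin C` with `sin C < 1`, which is where the angle at `C` must not be right.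
-/

open EuclideanGeometry

def det2 (v w : EuclideanSpace ℝ (Fin 2)) : ℝ := v 0 * w 1 - v 1 * w 0

noncomputable def inscribedSquareSide (a h : ℝ) : ℝ := a * h / (a + h)

lemma inscribedSquareSide_div {a : ℝ} (T : ℝ) (ha : a ≠ 0) :
    inscribedSquareSide a (T / a) = T / (a + T / a) := by
  rw [inscribedSquareSide, mul_div_cancel₀ T ha]

lemma add_div_lt_add_div {T a b : ℝ} (hb : 0 < b) (hab : b < a) (hT : T < a * b) :
    b + T / b < a + T / a := by
  have ha : 0 < a := hb.trans hab
  have hdiff : a + T / a - (b + T / b) = (a - b) * (a * b - T) / (a * b) := by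
    field_simp
    ring
  have : 0 < (a - b) * (a * b - T) / (a * b) := by
    apply div_pos (mul_pos _ _) (mul_pos ha hb) <;> linarith
  linarith

lemma inscribedSquareSide_div_lt {T a b : ℝ} (hT : 0 < T) (hb : 0 < b) (hab : b < a)
    (hTab : T < a * b) : inscribedSquareSide a (T / a) < inscribedSquareSide b (T / b) := by
  rw [inscribedSquareSide_div T (hb.trans hab).ne', inscribedSquareSide_div T hb.ne']
  exact div_lt_div_of_pos_left hT (by positivity) (add_div_lt_add_div hb hab hTab)

lemma det2_sq_add_inner_sq (u v : EuclideanSpace ℝ (Fin 2)) :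
    det2 u v ^ 2 + inner ℝ u v ^ 2 = inner ℝ u u * inner ℝ v v := by
  simp only [det2, PiLp.inner_apply, Fin.sum_univ_two, RCLike.inner_apply, conj_trivial]
  ring

lemma abs_det2_eq_sin_angle_mul_norm_mul_norm (u v : EuclideanSpace ℝ (Fin 2)) :
    |det2 u v| = Real.sin (InnerProductGeometry.angle u v) * (‖u‖ * ‖v‖) := by
  rw [InnerProductGeometry.sin_angle_mul_norm_mul_norm, ← det2_sq_add_inner_sq, ← Real.sqrt_sq_eq_abs]
  ring_nf

lemma det2_sub_sub_rotate (A B C : EuclideanSpace ℝ (Fin 2)) :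
    det2 (C - B) (A - B) = det2 (A - C) (B - C) := by
  simp only [det2, PiLp.sub_apply]
  ring

lemma abs_det2_eq_sin_angle_mul_dist_mul_dist (A B C : EuclideanSpace ℝ (Fin 2)) :
    |det2 (C - B) (A - B)| = Real.sin (∠ A C B) * (dist C A * dist B C) := by
  rw [det2_sub_sub_rotate, abs_det2_eq_sin_angle_mul_norm_mul_norm, dist_comm C A,
    dist_eq_norm, dist_eq_norm]
  rfl

lemma sin_angle_lt_one {V : Type*} [NormedAddCommGroup V] [InnerProductSpace ℝ V] {x y : V}
    (h : InnerProductGeometry.angle x y ≠ Real.pi / 2) :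
    Real.sin (InnerProductGeometry.angle x y) < 1 := by
  have hcos : Real.cos (InnerProductGeometry.angle x y) ≠ 0 :=
    mt InnerProductGeometry.cos_eq_zero_iff_angle_eq_pi_div_two.mp h
  nlinarith [Real.sin_sq_add_cos_sq (InnerProductGeometry.angle x y),
    Real.sin_le_one (InnerProductGeometry.angle x y), sq_pos_of_ne_zero hcos]

/-- Geometric form of Puzzle 5: in a triangle `ABC` with `a = BC > b = CA`
and no right angle at `C`, the inscribed square on the side of length `a`
is smaller than the inscribed square on the side of length `b`. -/
theorem stmt8 (A B C : EuclideanSpace ℝ (Fin 2))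
    (hABC : AffineIndependent ℝ ![A, B, C])
    (S a b ha hb : ℝ)
    (hS : S = |det2 (C - B) (A - B)| / 2)
    (haDef : a = dist B C) (hbDef : b = dist C A)
    (hhaDef : ha = 2 * S / a) (hhbDef : hb = 2 * S / b)
    (hab : a > b) (hangle : ∠ A C B ≠ Real.pi / 2) :
    a * ha / (a + ha) < b * hb / (b + hb) := by
  have hT : 2 * S = Real.sin (∠ A C B) * (b * a) := by
    rw [hS, haDef, hbDef, ← abs_det2_eq_sin_angle_mul_dist_mul_dist]
    ring
  rw [affineIndependent_iff_not_collinear_set, Set.pair_comm] at hABC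
  have hsin_pos : 0 < Real.sin (∠ A C B) := sin_pos_of_not_collinear hABC
  have hsin_lt : Real.sin (∠ A C B) < 1 := sin_angle_lt_one hangle
  have hb_pos : 0 < b := hbDef ▸ dist_pos.mpr (ne₁₂_of_not_collinear hABC).symm
  have hba : 0 < b * a := mul_pos hb_pos (hb_pos.trans hab)
  have hT_pos : 0 < 2 * S := hT ▸ mul_pos hsin_pos hba
  have hT_lt : 2 * S < a * b := by
    rw [hT, mul_comm b a]
    exact mul_lt_of_lt_one_left (by rwa [mul_comm]) hsin_lt
  rw [hhaDef, hhbDef]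
  exact inscribedSquareSide_div_lt hT_pos hb_pos hab hT_lt
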